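/- arXiv:1906.11933 — 4 statements merged into one kernel-verified Lean document; each statement's English description precedes it below -/
import Mathlib

section
/- Let m ≥ 3 and θ > 0. The function u(ζ) = c₂ + √((m-1)(m-2)/θ) · log(c₁ + (m-2)ζ)/(m-2), defined for ζ > -c₁/(m-2), satisfies both (m-2)·τ''/τ = θ·(u')² and τ²·u'' = (m-2)·τ·τ'·u', where τ(ζ) = (c₁ + (m-2)ζ)^{1/(2-m)}. -/
/-- The explicit harmonic map `u(ζ) = c₂ + √((m-1)(m-2)/θ)·log(c₁+(m-2)ζ)/(m-2)`
together with `τ(ζ) = (c₁+(m-2)ζ)^{1/(2-m)}` satisfies both fiber equations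
`(m-2)·τ''/τ = θ·(u')²` and `τ²·u'' = (m-2)·τ·τ'·u'` on the half-line. -/
theorem stmt2 (m : ℕ) (hm : 3 ≤ m) (θ c₁ c₂ : ℝ) (hθ : 0 < θ)
    (τ u : ℝ → ℝ)
    (hτ : ∀ ζ : ℝ, τ ζ = (c₁ + ((m : ℝ) - 2) * ζ) ^ ((1 : ℝ) / (2 - (m : ℝ))))
    (hu : ∀ ζ : ℝ, u ζ = c₂ + Real.sqrt (((m : ℝ) - 1) * ((m : ℝ) - 2) / θ) *
      Real.log (c₁ + ((m : ℝ) - 2) * ζ) / ((m : ℝ) - 2)) :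
    ∀ ζ : ℝ, ζ > -c₁ / ((m : ℝ) - 2) →
      ((m : ℝ) - 2) * deriv (deriv τ) ζ / τ ζ = θ * (deriv u ζ) ^ 2 ∧
      (τ ζ) ^ 2 * deriv (deriv u) ζ = ((m : ℝ) - 2) * τ ζ * deriv τ ζ * deriv u ζ := by
  have hM3 : (3:ℝ) ≤ (m:ℝ) := by exact_mod_cast hm
  set M : ℝ := (m : ℝ) with hMdef
  have hb : (0:ℝ) < M - 2 := by linarith
  have hb' : M - 2 ≠ 0 := ne_of_gt hb
  have h2M : (2:ℝ) - M ≠ 0 := by intro h; apply hb'; linarith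
  set p : ℝ := (1:ℝ) / (2 - M) with hp
  set K : ℝ := Real.sqrt ((M - 1) * (M - 2) / θ) with hKdef
  set S : ℝ → ℝ := fun x => c₁ + (M - 2) * x with hSdef
  have hK2 : θ * K ^ 2 = (M - 1) * (M - 2) := by
    have h0 : (0:ℝ) ≤ (M - 1) * (M - 2) / θ :=
      div_nonneg (mul_nonneg (by linarith) (by linarith)) hθ.le
    rw [hKdef, Real.sq_sqrt h0]
    field_simp
  have hSd : ∀ x : ℝ, HasDerivAt S (M - 2) x := by
    intro x
    have h := ((hasDerivAt_id x).const_mul (M - 2)).const_add c₁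
    simp only [mul_one] at h
    exact h
  have hτfun : τ = fun x => S x ^ p := funext hτ
  have hufun : u = fun x => c₂ + K * Real.log (S x) / (M - 2) := funext hu
  intro ζ hζ
  have hSζ : 0 < S ζ := by
    have h1 : -c₁ < ζ * (M - 2) := (div_lt_iff₀ hb).mp hζ
    simp only [hSdef]; nlinarith
  have hcont : Continuous S := by fun_prop
  have hev : ∀ᶠ x in nhds ζ, 0 < S x :=
    hcont.continuousAt.eventually (eventually_gt_nhds hSζ)
  -- first derivative of τ
  have hτd : ∀ x, 0 < S x → HasDerivAt τ (p * S x ^ (p - 1) * (M - 2)) x := by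
    intro x hx
    rw [hτfun]
    exact (Real.hasDerivAt_rpow_const (x := S x) (p := p) (Or.inl hx.ne')).comp x (hSd x)
  have hdτ : deriv τ =ᶠ[nhds ζ] fun x => p * S x ^ (p - 1) * (M - 2) :=
    hev.mono fun x hx => (hτd x hx).deriv
  -- second derivative of τ
  have hτdd : HasDerivAt (fun x => p * S x ^ (p - 1) * (M - 2))
      (p * ((p - 1) * S ζ ^ (p - 1 - 1) * (M - 2)) * (M - 2)) ζ := by
    have base : HasDerivAt (fun x => S x ^ (p - 1)) ((p - 1) * S ζ ^ (p - 1 - 1) * (M - 2)) ζ :=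
      (Real.hasDerivAt_rpow_const (x := S ζ) (p := p - 1) (Or.inl hSζ.ne')).comp ζ (hSd ζ)
    exact (base.const_mul p).mul_const (M - 2)
  have hddτ : deriv (deriv τ) ζ = p * ((p - 1) * S ζ ^ (p - 1 - 1) * (M - 2)) * (M - 2) := by
    rw [hdτ.deriv_eq, hτdd.deriv]
  -- first derivative of u
  have hud : ∀ x, 0 < S x → HasDerivAt u (K * ((S x)⁻¹ * (M - 2)) / (M - 2)) x := by
    intro x hx
    rw [hufun]
    exact ((((Real.hasDerivAt_log hx.ne').comp x (hSd x)).const_mul K).div_const (M - 2)).const_add c₂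
  have hdu : deriv u =ᶠ[nhds ζ] fun x => K * (S x)⁻¹ := by
    refine hev.mono fun x hx => ?_
    rw [(hud x hx).deriv]
    field_simp
  have hduζ : deriv u ζ = K * (S ζ)⁻¹ := hdu.self_of_nhds
  -- second derivative of u
  have hudd : HasDerivAt (fun x => K * (S x)⁻¹) (K * (-(M - 2) / S ζ ^ 2)) ζ :=
    ((hSd ζ).inv hSζ.ne').const_mul K
  have hddu : deriv (deriv u) ζ = K * (-(M - 2) / S ζ ^ 2) := by
    rw [hdu.deriv_eq, hudd.deriv]
  -- rpow simplifications
  have hT : 0 < S ζ ^ p := Real.rpow_pos_of_pos hSζ p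
  have hT1 : S ζ ^ (p - 1) = S ζ ^ p / S ζ := by
    rw [Real.rpow_sub hSζ, Real.rpow_one]
  have hT2 : S ζ ^ (p - 1 - 1) = S ζ ^ p / S ζ ^ 2 := by
    rw [show p - 1 - 1 = p - (2:ℕ) by push_cast; ring, Real.rpow_sub hSζ, Real.rpow_natCast]
  have hτζ : τ ζ = S ζ ^ p := hτ ζ
  have hdτζ : deriv τ ζ = p * S ζ ^ (p - 1) * (M - 2) := hdτ.self_of_nhds
  constructor
  · rw [hddτ, hτζ, hduζ, hT2, hp]
    obtain ⟨s, hs0, hseq⟩ : ∃ s : ℝ, 0 < s ∧ S ζ = s := ⟨S ζ, hSζ, rfl⟩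
    rw [hseq]
    obtain ⟨T, hT0, hTeq⟩ : ∃ T : ℝ, 0 < T ∧ s ^ ((1:ℝ)/(2-M)) = T := ⟨_, Real.rpow_pos_of_pos hs0 _, rfl⟩
    rw [hTeq]
    field_simp
    linear_combination (-(M - 2) ^ 2) * hK2
  · rw [hddu, hτζ, hdτζ, hduζ, hT1, hp]
    field_simp
    ring
end

section
/- Let n, m be positive integers, θ > 0, k ≠ 0, and c₇ ∈ ℝ. Define f(ξ) = e^{kξ}, φ(ξ) = e^{kξ}, u(ξ) = kξ, and h(ξ) = (k/2)(2 - n + 3m + θ)ξ - e^{-2kξ}c₇/(2k) + c₈. Then these functions satisfy (n-2)·φ''/φ - m·f''/f - 2m·(φ'/φ)·(f'/f) + h'' + 2·(φ'/φ)·h' - θ·(u')² = 0 for all ξ ∈ ℝ. -/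
lemma hasDerivAt_exp_mul (k x : ℝ) :
    HasDerivAt (fun ξ : ℝ => Real.exp (k * ξ)) (k * Real.exp (k * x)) x := by
  have h := (Real.hasDerivAt_exp (k * x)).comp x ((hasDerivAt_id x).const_mul k)
  simp only [Function.comp_def, mul_one] at h
  rw [mul_comm]; exact h

lemma deriv_exp_mul (k : ℝ) :
    deriv (fun ξ : ℝ => Real.exp (k * ξ)) = fun x => k * Real.exp (k * x) := by
  funext x; exact (hasDerivAt_exp_mul k x).deriv

/-- Verification of the off-diagonal invariant-soliton equation (1.7) for
`f(ξ) = e^{kξ}`, `φ(ξ) = e^{kξ}`, `u(ξ) = kξ`,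
`h(ξ) = (k/2)(2-n+3m+θ)ξ - e^{-2kξ}c₇/(2k) + c₈`. -/
theorem stmt3 (n m : ℕ) (hn : 0 < n) (hm : 0 < m) (θ k c₇ c₈ : ℝ)
    (hθ : 0 < θ) (hk : k ≠ 0)
    (f φ u h : ℝ → ℝ)
    (hf : ∀ ξ : ℝ, f ξ = Real.exp (k * ξ))
    (hφ : ∀ ξ : ℝ, φ ξ = Real.exp (k * ξ))
    (hu : ∀ ξ : ℝ, u ξ = k * ξ)
    (hh : ∀ ξ : ℝ, h ξ = (k / 2) * (2 - (n : ℝ) + 3 * (m : ℝ) + θ) * ξ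
      - Real.exp (-2 * k * ξ) * c₇ / (2 * k) + c₈) :
    ∀ ξ : ℝ,
      ((n : ℝ) - 2) * (deriv (deriv φ) ξ / φ ξ)
        - (m : ℝ) * (deriv (deriv f) ξ / f ξ)
        - 2 * (m : ℝ) * (deriv φ ξ / φ ξ) * (deriv f ξ / f ξ)
        + deriv (deriv h) ξ
        + 2 * (deriv φ ξ / φ ξ) * deriv h ξ
        - θ * (deriv u ξ) ^ 2 = 0 := by
  have hf' : f = fun ξ => Real.exp (k * ξ) := funext hf
  have hφ' : φ = fun ξ => Real.exp (k * ξ) := funext hφ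
  have hu' : u = fun ξ => k * ξ := funext hu
  set A : ℝ := (k / 2) * (2 - (n : ℝ) + 3 * (m : ℝ) + θ) with hA
  have hh' : h = fun ξ => A * ξ - Real.exp (-2 * k * ξ) * c₇ / (2 * k) + c₈ :=
    funext hh
  subst hf' hφ' hu' hh'
  -- derivatives of exp(kξ)
  have dexp := deriv_exp_mul k
  have ddexp : deriv (deriv (fun ξ : ℝ => Real.exp (k * ξ)))
      = fun x => k * (k * Real.exp (k * x)) := by
    rw [dexp]
    funext x
    exact ((hasDerivAt_exp_mul k x).const_mul k).deriv
  -- derivative of u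
  have du : deriv (fun ξ : ℝ => k * ξ) = fun _ : ℝ => k := by
    funext x; simpa using ((hasDerivAt_id x).const_mul k).deriv
  -- derivative of h
  have dh1 : ∀ x : ℝ, HasDerivAt
      (fun ξ => A * ξ - Real.exp (-2 * k * ξ) * c₇ / (2 * k) + c₈)
      (A + c₇ * Real.exp (-2 * k * x)) x := by
    intro x
    have h1 : HasDerivAt (fun ξ : ℝ => A * ξ) A x := by
      simpa using (hasDerivAt_id x).const_mul A
    have h2 : HasDerivAt (fun ξ : ℝ => Real.exp (-2 * k * ξ) * c₇ / (2 * k))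
        ((-2 * k) * Real.exp (-2 * k * x) * c₇ / (2 * k)) x := by
      exact ((hasDerivAt_exp_mul (-2 * k) x).mul_const c₇).div_const (2 * k)
    have h3 := (h1.sub h2).add_const c₈
    rw [show A + c₇ * Real.exp (-2 * k * x) = A - -2 * k * Real.exp (-2 * k * x) * c₇ / (2 * k) by
      field_simp
      ring]
    exact h3
  have dh : deriv (fun ξ => A * ξ - Real.exp (-2 * k * ξ) * c₇ / (2 * k) + c₈)
      = fun x => A + c₇ * Real.exp (-2 * k * x) := by
    funext x; exact (dh1 x).deriv
  have ddh : deriv (deriv (fun ξ => A * ξ - Real.exp (-2 * k * ξ) * c₇ / (2 * k) + c₈))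
      = fun x => c₇ * ((-2 * k) * Real.exp (-2 * k * x)) := by
    rw [dh]
    funext x
    exact ((hasDerivAt_exp_mul (-2 * k) x).const_mul c₇).const_add A |>.deriv
  intro ξ
  rw [ddexp, ddh, dexp, dh, du]
  have he : Real.exp (k * ξ) ≠ 0 := Real.exp_ne_zero _
  field_simp
  ring
end

section
/- Let n ≥ 1, m ≥ 1, k ≥ 0, b ∈ ℝ, and let N be a nonzero real number satisfying N² + 2kN - (m + k²(n-2)) = 0 (i.e., N = N± = -k ± √(m + k²(n-1))). Define on the half-line Nξ + b > 0: φ(ξ) = (Nξ+b)^{-k/N}, f(ξ) = (Nξ+b)^{-1/N}, h(ξ) = -((m - (n-2)k + N)/N)·log(Nξ+b). Then φ''/φ - (n-1)(φ'/φ)² + m(φ'/φ)(f'/f) - (φ'/φ)h' = 0. -/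
private lemma rpow_aux (N b p : ℝ) (ξ : ℝ) (hξ : 0 < N * ξ + b) :
    HasDerivAt (fun x => (N * x + b) ^ p) (p * (N * ξ + b) ^ (p - 1) * N) ξ := by
  have h1 : HasDerivAt (fun x : ℝ => N * x + b) N ξ := by
    simpa using ((hasDerivAt_id ξ).const_mul N).add_const b
  exact (Real.hasDerivAt_rpow_const (Or.inl hξ.ne')).comp ξ h1

/-- For `N ≠ 0` with `N² + 2kN - (m + k²(n-2)) = 0` and
`φ(ξ) = (Nξ+b)^{-k/N}`, `f(ξ) = (Nξ+b)^{-1/N}`,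
`h(ξ) = -((m-(n-2)k+N)/N)·log(Nξ+b)` on `Nξ + b > 0`, the steady equation
`φ''/φ - (n-1)(φ'/φ)² + m(φ'/φ)(f'/f) - (φ'/φ)h' = 0` holds. -/
theorem stmt14 (n m : ℕ) (hn : 1 ≤ n) (hm : 1 ≤ m) (k b : ℝ) (hk : 0 ≤ k)
    (N : ℝ) (hN : N ≠ 0)
    (hNeq : N ^ 2 + 2 * k * N - ((m : ℝ) + k ^ 2 * ((n : ℝ) - 2)) = 0)
    (φ f h : ℝ → ℝ)
    (hφ : ∀ ξ : ℝ, 0 < N * ξ + b → φ ξ = (N * ξ + b) ^ (-(k / N)))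
    (hf : ∀ ξ : ℝ, 0 < N * ξ + b → f ξ = (N * ξ + b) ^ (-(1 / N)))
    (hh : ∀ ξ : ℝ, 0 < N * ξ + b →
      h ξ = -(((m : ℝ) - ((n : ℝ) - 2) * k + N) / N) * Real.log (N * ξ + b)) :
    ∀ ξ : ℝ, 0 < N * ξ + b →
      deriv (deriv φ) ξ / φ ξ - ((n : ℝ) - 1) * (deriv φ ξ / φ ξ) ^ 2
        + (m : ℝ) * (deriv φ ξ / φ ξ) * (deriv f ξ / f ξ)
        - (deriv φ ξ / φ ξ) * deriv h ξ = 0 := by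
  have hopen : IsOpen {x : ℝ | 0 < N * x + b} :=
    isOpen_lt continuous_const (by continuity)
  set p : ℝ := -(k / N) with hp
  set q : ℝ := -(1 / N) with hq
  set c : ℝ := -(((m : ℝ) - ((n : ℝ) - 2) * k + N) / N) with hc
  -- derivative of φ on the open set
  have hdφ : ∀ x : ℝ, 0 < N * x + b →
      deriv φ x = p * (N * x + b) ^ (p - 1) * N := by
    intro x hx
    have hev : φ =ᶠ[nhds x] fun y => (N * y + b) ^ p :=
      Filter.eventually_of_mem (hopen.mem_nhds hx) (fun y hy => hφ y hy)
    rw [hev.deriv_eq]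
    exact (rpow_aux N b p x hx).deriv
  intro ξ hξ
  have hu := hξ
  set u : ℝ := N * ξ + b with hudef
  -- second derivative of φ
  have hdφev : deriv φ =ᶠ[nhds ξ] fun y => p * (N * y + b) ^ (p - 1) * N :=
    Filter.eventually_of_mem (hopen.mem_nhds hξ) (fun y hy => hdφ y hy)
  have hd2φ : deriv (deriv φ) ξ = p * ((p - 1) * u ^ (p - 1 - 1) * N) * N := by
    rw [hdφev.deriv_eq]
    exact (((rpow_aux N b (p - 1) ξ hξ).const_mul p).mul_const N).deriv
  have hdf : deriv f ξ = q * u ^ (q - 1) * N := by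
    have hev : f =ᶠ[nhds ξ] fun y => (N * y + b) ^ q :=
      Filter.eventually_of_mem (hopen.mem_nhds hξ) (fun y hy => hf y hy)
    rw [hev.deriv_eq]
    exact (rpow_aux N b q ξ hξ).deriv
  have hdh : deriv h ξ = c * (u⁻¹ * N) := by
    have hev : h =ᶠ[nhds ξ] fun y => c * Real.log (N * y + b) :=
      Filter.eventually_of_mem (hopen.mem_nhds hξ) (fun y hy => hh y hy)
    rw [hev.deriv_eq]
    have h1 : HasDerivAt (fun x : ℝ => N * x + b) N ξ := by
      simpa using ((hasDerivAt_id ξ).const_mul N).add_const b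
    exact (((Real.hasDerivAt_log hξ.ne').comp ξ h1).const_mul c).deriv
  have hune : u ≠ 0 := hξ.ne'
  have hup : (0:ℝ) < u ^ p := Real.rpow_pos_of_pos hξ p
  have huq : (0:ℝ) < u ^ q := Real.rpow_pos_of_pos hξ q
  have e1 : u ^ (p - 1) = u ^ p / u := by
    rw [Real.rpow_sub hξ, Real.rpow_one]
  have e2 : u ^ (p - 1 - 1) = u ^ p / u / u := by
    rw [Real.rpow_sub hξ, Real.rpow_sub hξ, Real.rpow_one]
  have e3 : u ^ (q - 1) = u ^ q / u := by
    rw [Real.rpow_sub hξ, Real.rpow_one]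
  rw [hd2φ, hdf, hdh, hdφ ξ hξ, hφ ξ hξ, hf ξ hξ, e1, e2, e3]
  rw [← hudef]
  rw [hp, hc, hq]
  field_simp
  ring
end

section
/- Let n ≥ 1, m ≥ 1, k ≥ 0, b ∈ ℝ, and N ≠ 0 with N² + 2kN - (m + k²(n-2)) = 0. With φ, f, h as above (φ = (Nξ+b)^{-k/N}, f = (Nξ+b)^{-1/N}, h = -((m-(n-2)k+N)/N)·log(Nξ+b)) on Nξ + b > 0, the equation f''/f - (n-2)(φ'/φ)(f'/f) + (m-1)(f'/f)² - (f'/f)h' = 0 holds. -/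
open Real Filter

private lemma hasDerivAt_affine_rpow (N b : ℝ) (p x : ℝ) (hx : 0 < N * x + b) :
    HasDerivAt (fun y : ℝ => (N * y + b) ^ p)
      (p * (N * x + b) ^ (p - 1) * N) x := by
  have h1 : HasDerivAt (fun y : ℝ => N * y + b) N x := by
    simpa using ((hasDerivAt_id x).const_mul N).add_const b
  exact
    (Real.hasDerivAt_rpow_const (x := N * x + b) (p := p) (Or.inl hx.ne')).comp x h1

/-- For `N ≠ 0` with `N² + 2kN - (m + k²(n-2)) = 0` and
`φ(ξ) = (Nξ+b)^{-k/N}`, `f(ξ) = (Nξ+b)^{-1/N}`,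
`h(ξ) = -((m-(n-2)k+N)/N)·log(Nξ+b)` on `Nξ + b > 0`, the steady equation
`f''/f - (n-2)(φ'/φ)(f'/f) + (m-1)(f'/f)² - (f'/f)h' = 0` holds. -/
theorem stmt15 (n m : ℕ) (hn : 1 ≤ n) (hm : 1 ≤ m) (k b : ℝ) (hk : 0 ≤ k)
    (N : ℝ) (hN : N ≠ 0)
    (hNeq : N ^ 2 + 2 * k * N - ((m : ℝ) + k ^ 2 * ((n : ℝ) - 2)) = 0)
    (φ f h : ℝ → ℝ)
    (hφ : ∀ ξ : ℝ, 0 < N * ξ + b → φ ξ = (N * ξ + b) ^ (-(k / N)))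
    (hf : ∀ ξ : ℝ, 0 < N * ξ + b → f ξ = (N * ξ + b) ^ (-(1 / N)))
    (hh : ∀ ξ : ℝ, 0 < N * ξ + b →
      h ξ = -(((m : ℝ) - ((n : ℝ) - 2) * k + N) / N) * Real.log (N * ξ + b)) :
    ∀ ξ : ℝ, 0 < N * ξ + b →
      deriv (deriv f) ξ / f ξ
        - ((n : ℝ) - 2) * (deriv φ ξ / φ ξ) * (deriv f ξ / f ξ)
        + ((m : ℝ) - 1) * (deriv f ξ / f ξ) ^ 2
        - (deriv f ξ / f ξ) * deriv h ξ = 0 := by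
  have hopen : IsOpen {x : ℝ | 0 < N * x + b} :=
    isOpen_lt continuous_const (by continuity)
  -- deriv f formula on the open set
  have hdf : ∀ x : ℝ, 0 < N * x + b →
      deriv f x = (-(1 / N)) * (N * x + b) ^ (-(1 / N) - 1) * N := by
    intro x hx
    have hev : f =ᶠ[nhds x] fun y => (N * y + b) ^ (-(1 / N)) :=
      eventually_of_mem (hopen.mem_nhds hx) (fun y hy => hf y hy)
    rw [hev.deriv_eq]
    exact (hasDerivAt_affine_rpow N b _ x hx).deriv
  intro ξ hξ
  set u : ℝ := N * ξ + b with hu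
  have hu0 : u ≠ 0 := hξ.ne'
  -- second derivative of f
  have hddf : deriv (deriv f) ξ =
      (-(1 / N)) * ((-(1 / N) - 1) * u ^ (-(1 / N) - 1 - 1) * N) * N := by
    have hev : deriv f =ᶠ[nhds ξ]
        fun y => (-(1 / N)) * (N * y + b) ^ (-(1 / N) - 1) * N :=
      eventually_of_mem (hopen.mem_nhds hξ) (fun y hy => hdf y hy)
    rw [hev.deriv_eq]
    have := (((hasDerivAt_affine_rpow N b (-(1 / N) - 1) ξ hξ).const_mul
      (-(1 / N))).mul_const N).deriv
    simpa [mul_comm, mul_left_comm, mul_assoc] using this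
  -- deriv φ
  have hdφ : deriv φ ξ = (-(k / N)) * u ^ (-(k / N) - 1) * N := by
    have hev : φ =ᶠ[nhds ξ] fun y => (N * y + b) ^ (-(k / N)) :=
      eventually_of_mem (hopen.mem_nhds hξ) (fun y hy => hφ y hy)
    rw [hev.deriv_eq]
    exact (hasDerivAt_affine_rpow N b _ ξ hξ).deriv
  -- deriv h
  have hdh : deriv h ξ =
      -(((m : ℝ) - ((n : ℝ) - 2) * k + N) / N) * (N / u) := by
    have hev : h =ᶠ[nhds ξ]
        fun y => -(((m : ℝ) - ((n : ℝ) - 2) * k + N) / N) * Real.log (N * y + b) :=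
      eventually_of_mem (hopen.mem_nhds hξ) (fun y hy => hh y hy)
    rw [hev.deriv_eq]
    have h1 : HasDerivAt (fun y : ℝ => N * y + b) N ξ := by
      simpa using ((hasDerivAt_id ξ).const_mul N).add_const b
    have := ((h1.log hu0).const_mul
      (-(((m : ℝ) - ((n : ℝ) - 2) * k + N) / N))).deriv
    simpa using this
  have hfξ : f ξ = u ^ (-(1 / N)) := hf ξ hξ
  have hφξ : φ ξ = u ^ (-(k / N)) := hφ ξ hξ
  have hdfξ : deriv f ξ = (-(1 / N)) * u ^ (-(1 / N) - 1) * N := hdf ξ hξ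
  -- rewrite rpow of differences
  have e1 : u ^ (-(1 / N) - 1) = u ^ (-(1 / N)) / u := by
    rw [Real.rpow_sub hξ, Real.rpow_one]
  have e2 : u ^ (-(1 / N) - 1 - 1) = u ^ (-(1 / N)) / u / u := by
    rw [Real.rpow_sub hξ, Real.rpow_sub hξ, Real.rpow_one]
  have e3 : u ^ (-(k / N) - 1) = u ^ (-(k / N)) / u := by
    rw [Real.rpow_sub hξ, Real.rpow_one]
  have hA : u ^ (-(1 / N)) ≠ 0 := (Real.rpow_pos_of_pos hξ _).ne'
  have hB : u ^ (-(k / N)) ≠ 0 := (Real.rpow_pos_of_pos hξ _).ne'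
  rw [hddf, hdφ, hdh, hfξ, hφξ, hdfξ, e1, e2, e3]
  field_simp
  ring
end
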